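/- arXiv:2512.12451 — 2 statements merged into one kernel-verified Lean document; each statement's English description precedes it below -/
import Mathlib

section
/- Let C be a rigid tensor category, i.e. a preadditive category equipped with a symmetric monoidal structure whose tensor product is additive in each variable, and in which every object admits a dual. Let M be an object of C and f : M ⟶ M an endomorphism. If f is smash-nilpotent, i.e. for some positive integer n the n-fold tensor power f^{⊗n} : M^{⊗n} ⟶ M^{⊗n} is the zero morphism, then f is nilpotent: there is a positive integer m such that the m-fold composite f^m : M ⟶ M is the zero morphism. -/
open CategoryTheory MonoidalCategory BraidedCategory

universe v u

variable {C : Type u} [Category.{v} C] [MonoidalCategory C]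

/-- The `n`-th tensor power of an object `M`, defined by iterating the tensor product:
`M^{⊗0} = 𝟙_ C` and `M^{⊗(n+1)} = M^{⊗n} ⊗ M`. -/
def tensorPowObj (M : C) : ℕ → C
  | 0 => 𝟙_ C
  | n + 1 => tensorPowObj M n ⊗ M

/-- The `n`-th tensor power of a morphism `f : M ⟶ M`, defined by iterating the tensor
product of morphisms. -/
def tensorPowHom {M : C} (f : M ⟶ M) : (n : ℕ) → (tensorPowObj M n ⟶ tensorPowObj M n)
  | 0 => 𝟙 (𝟙_ C)
  | n + 1 => MonoidalCategory.tensorHom (tensorPowHom f n) f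

/-- The `n`-fold composition power of an endomorphism `f : M ⟶ M`. -/
def compPow {M : C} (f : M ⟶ M) : ℕ → (M ⟶ M)
  | 0 => 𝟙 M
  | n + 1 => compPow f n ≫ f

section
variable [SymmetricCategory C] [RigidCategory C]

lemma key_step {M X D : C} (f : M ⟶ M) (T : X ⟶ X) (u : M ⟶ X ⊗ D) (v : X ⊗ D ⟶ M) :
    u ≫ (X ◁ (λ_ D).inv) ≫ (X ◁ (η_ M (Mᘁ) ▷ D)) ≫ (X ◁ (α_ M (Mᘁ) D).hom) ≫
      (α_ X M (Mᘁ ⊗ D)).inv ≫ ((T ⊗ₘ f) ▷ (Mᘁ ⊗ D)) ≫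
      (α_ X M (Mᘁ ⊗ D)).hom ≫ (X ◁ (α_ M (Mᘁ) D).inv) ≫ (X ◁ (β_ (M ⊗ Mᘁ) D).hom) ≫
      (α_ X D (M ⊗ Mᘁ)).inv ≫ (v ▷ (M ⊗ Mᘁ)) ≫ (β_ M (M ⊗ Mᘁ)).hom ≫
      (α_ M (Mᘁ) M).hom ≫ (M ◁ ε_ M (Mᘁ)) ≫ (ρ_ M).hom
    = u ≫ (T ▷ D) ≫ v ≫ f := by
  calc
    _ = u ⊗≫ (X ◁ (η_ M (Mᘁ) ▷ D) ≫ T ▷ ((M ⊗ Mᘁ) ⊗ D)) ⊗≫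
        X ◁ ((f ▷ (Mᘁ)) ▷ D) ⊗≫ X ◁ (β_ (M ⊗ Mᘁ) D).hom ⊗≫
        v ▷ (M ⊗ Mᘁ) ⊗≫ (β_ M (M ⊗ Mᘁ)).hom ⊗≫ M ◁ ε_ M (Mᘁ) ⊗≫ 𝟙 M := by
      rw [MonoidalCategory.tensorHom_def]; monoidal
    _ = u ⊗≫ T ▷ (𝟙_ C ⊗ D) ⊗≫
        X ◁ (((η_ M (Mᘁ) ≫ (f ▷ (Mᘁ))) ▷ D) ≫ (β_ (M ⊗ Mᘁ) D).hom) ⊗≫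
        v ▷ (M ⊗ Mᘁ) ⊗≫ (β_ M (M ⊗ Mᘁ)).hom ⊗≫ M ◁ ε_ M (Mᘁ) ⊗≫ 𝟙 M := by
      rw [whisker_exchange]; monoidal
    _ = u ⊗≫ T ▷ (𝟙_ C ⊗ D) ⊗≫
        X ◁ ((β_ (𝟙_ C) D).hom ≫ D ◁ (η_ M (Mᘁ) ≫ (f ▷ (Mᘁ)))) ⊗≫
        v ▷ (M ⊗ Mᘁ) ⊗≫ (β_ M (M ⊗ Mᘁ)).hom ⊗≫ M ◁ ε_ M (Mᘁ) ⊗≫ 𝟙 M := by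
      rw [braiding_naturality_left]
    _ = u ⊗≫ T ▷ D ⊗≫
        (((X ⊗ D) ◁ (η_ M (Mᘁ) ≫ (f ▷ (Mᘁ)))) ≫ (v ▷ (M ⊗ Mᘁ))) ⊗≫
        (β_ M (M ⊗ Mᘁ)).hom ⊗≫ M ◁ ε_ M (Mᘁ) ⊗≫ 𝟙 M := by
      rw [braiding_tensorUnit_left]; monoidal
    _ = u ⊗≫ T ▷ D ⊗≫ v ▷ 𝟙_ C ⊗≫
        ((M ◁ (η_ M (Mᘁ) ≫ (f ▷ (Mᘁ)))) ≫ (β_ M (M ⊗ Mᘁ)).hom) ⊗≫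
        M ◁ ε_ M (Mᘁ) ⊗≫ 𝟙 M := by
      rw [whisker_exchange]; monoidal
    _ = u ⊗≫ T ▷ D ⊗≫ v ▷ 𝟙_ C ⊗≫
        ((β_ M (𝟙_ C)).hom ≫ ((η_ M (Mᘁ) ≫ (f ▷ (Mᘁ))) ▷ M)) ⊗≫
        M ◁ ε_ M (Mᘁ) ⊗≫ 𝟙 M := by
      rw [braiding_naturality_right]
    _ = u ⊗≫ T ▷ D ⊗≫ v ⊗≫ (η_ M (Mᘁ) ▷ M) ⊗≫
        ((f ▷ (Mᘁ ⊗ M)) ≫ (M ◁ ε_ M (Mᘁ))) ⊗≫ 𝟙 M := by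
      rw [braiding_tensorUnit_right]; monoidal
    _ = u ⊗≫ T ▷ D ⊗≫ (v ≫ (λ_ M).inv) ≫
        (η_ M (Mᘁ) ▷ M ≫ (α_ M (Mᘁ) M).hom ≫ M ◁ ε_ M (Mᘁ)) ≫ (ρ_ M).hom ≫ f := by
      rw [← whisker_exchange]; monoidal
    _ = u ≫ (T ▷ D) ≫ v ≫ f := by
      rw [ExactPairing.evaluation_coevaluation]; monoidal

lemma key {M : C} (f : M ⟶ M) :
    ∀ k : ℕ, ∃ (D : C) (u : M ⟶ tensorPowObj M k ⊗ D) (v : tensorPowObj M k ⊗ D ⟶ M),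
      compPow f k = u ≫ (tensorPowHom f k ▷ D) ≫ v
  | 0 => ⟨M, (λ_ M).inv, (λ_ M).hom, by simp [compPow, tensorPowHom, tensorPowObj]⟩
  | k + 1 => by
    obtain ⟨D, u, v, hk⟩ := key f k
    refine ⟨Mᘁ ⊗ D,
      u ≫ (tensorPowObj M k ◁ (λ_ D).inv) ≫ (tensorPowObj M k ◁ (η_ M (Mᘁ) ▷ D)) ≫
        (tensorPowObj M k ◁ (α_ M (Mᘁ) D).hom) ≫ (α_ (tensorPowObj M k) M (Mᘁ ⊗ D)).inv,
      (α_ (tensorPowObj M k) M (Mᘁ ⊗ D)).hom ≫ (tensorPowObj M k ◁ (α_ M (Mᘁ) D).inv) ≫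
        (tensorPowObj M k ◁ (β_ (M ⊗ Mᘁ) D).hom) ≫ (α_ (tensorPowObj M k) D (M ⊗ Mᘁ)).inv ≫
        (v ▷ (M ⊗ Mᘁ)) ≫ (β_ M (M ⊗ Mᘁ)).hom ≫
        (α_ M (Mᘁ) M).hom ≫ (M ◁ ε_ M (Mᘁ)) ≫ (ρ_ M).hom, ?_⟩
    show compPow f k ≫ f = _
    rw [hk]
    simp only [tensorPowHom, tensorPowObj, Category.assoc]
    rw [key_step f (tensorPowHom f k) u v]
end

/-- In a rigid symmetric monoidal preadditive category, a smash-nilpotent endomorphism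
(some positive tensor power of it vanishes) is nilpotent (some positive composition power
of it vanishes). -/
theorem smash_nilpotent_is_nilpotent
    {C : Type u} [Category.{v} C] [Preadditive C] [MonoidalCategory C]
    [MonoidalPreadditive C] [SymmetricCategory C] [RigidCategory C]
    {M : C} (f : M ⟶ M) (n : ℕ) (hn : 0 < n) (h : tensorPowHom f n = 0) :
    ∃ m : ℕ, 0 < m ∧ compPow f m = 0 := by
  obtain ⟨D, u, v, hk⟩ := key f n
  exact ⟨n, hn, by rw [hk, h]; simp⟩
end

section
/- Let k be an algebraically closed field. Any two plane projective curves over k have non-empty intersection: if f and g are homogeneous polynomials of positive degree in three variables x₀, x₁, x₂ with coefficients in k, then there exists a nonzero point a = (a₀, a₁, a₂) ∈ k³ with f(a) = 0 and g(a) = 0. -/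
open MvPolynomial

namespace PlaneCurvesAux

variable {k : Type*} [Field k]

/-- The homogeneous component of a product with a homogeneous polynomial. -/
lemma hc_mul_homog (a f : MvPolynomial (Fin 3) k) {d : ℕ} (hf : f.IsHomogeneous d) (q : ℕ) :
    homogeneousComponent (q + d) (a * f) = homogeneousComponent q a * f := by
  conv_lhs => rw [← sum_homogeneousComponent a, Finset.sum_mul, map_sum]
  have key : ∀ j, homogeneousComponent (q + d) (homogeneousComponent j a * f)
      = if q = j then homogeneousComponent j a * f else 0 := by
    intro j
    have hj : (homogeneousComponent j a * f).IsHomogeneous (j + d) :=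
      (homogeneousComponent_isHomogeneous j a).mul hf
    rw [homogeneousComponent_of_mem hj]
    simp [Nat.add_right_cancel_iff]
  simp_rw [key]
  rw [Finset.sum_ite_eq]
  by_cases h : q ∈ Finset.range (a.totalDegree + 1)
  · rw [if_pos h]
  · rw [if_neg h, homogeneousComponent_eq_zero, zero_mul]
    simpa using h

lemma hc_mul_homog_zero (a f : MvPolynomial (Fin 3) k) {d q : ℕ} (hf : f.IsHomogeneous d)
    (h : q < d) : homogeneousComponent q (a * f) = 0 := by
  conv_lhs => rw [← sum_homogeneousComponent a, Finset.sum_mul, map_sum]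
  refine Finset.sum_eq_zero fun j _ => ?_
  have hj : (homogeneousComponent j a * f).IsHomogeneous (j + d) :=
    (homogeneousComponent_isHomogeneous j a).mul hf
  rw [homogeneousComponent_of_mem hj, if_neg (by omega)]

/-- A homogeneous polynomial lies in any submodule containing the monomials of its degree. -/
lemma homog_mem_span {q : ℕ} {p : MvPolynomial (Fin 3) k} (hp : p.IsHomogeneous q)
    {M : Submodule k (MvPolynomial (Fin 3) k)}
    (hM : ∀ τ : Fin 3 →₀ ℕ, τ.degree = q → monomial τ (1 : k) ∈ M) : p ∈ M := by
  rw [p.as_sum]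
  refine Submodule.sum_mem _ fun τ hτ => ?_
  have hc : coeff τ p ≠ 0 := mem_support_iff.mp hτ
  have hdeg : τ.degree = q := by
    rw [Finsupp.degree_eq_weight_one]
    exact hp hc
  have : (monomial τ (coeff τ p) : MvPolynomial (Fin 3) k)
      = (coeff τ p) • monomial τ (1 : k) := by
    rw [smul_eq_C_mul, C_mul_monomial, mul_one]
  rw [this]
  exact M.smul_mem _ (hM τ hdeg)

/-- The spanning set: products `f^i * g^j * (small monomial)` of total degree `q`. -/
def Bset (f g : MvPolynomial (Fin 3) k) (d e N q : ℕ) : Set (MvPolynomial (Fin 3) k) :=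
  {x | ∃ i j : ℕ, ∃ τ : Fin 3 →₀ ℕ, (∀ l, τ l < 3 * N) ∧ i * d + j * e + τ.degree = q ∧
    x = f ^ i * g ^ j * monomial τ 1}

lemma monomial_mem_span (f g : MvPolynomial (Fin 3) k) (d e N : ℕ) (hd : 0 < d) (he : 0 < e)
    (hf : f.IsHomogeneous d) (hg : g.IsHomogeneous e) (hN : 0 < N)
    (hX : ∀ i : Fin 3, (X i : MvPolynomial (Fin 3) k) ^ N ∈ Ideal.span {f, g}) :
    ∀ (q : ℕ) (σ : Fin 3 →₀ ℕ), σ.degree = q →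
      (monomial σ (1 : k)) ∈ Submodule.span k (Bset f g d e N q) := by
  intro q
  induction q using Nat.strong_induction_on with
  | _ q IH =>
  intro σ hσ
  by_cases hq : q < 3 * N
  · refine Submodule.subset_span ⟨0, 0, σ, fun l => ?_, by simpa using hσ, by simp⟩
    exact lt_of_le_of_lt (hσ ▸ Finsupp.le_degree l σ) hq
  · push_neg at hq
    have hex : ∃ i₀ : Fin 3, N ≤ σ i₀ := by
      by_contra hno
      push_neg at hno
      have h1 : σ.degree ≤ ∑ l : Fin 3, σ l :=
        Finset.sum_le_sum_of_subset (Finset.subset_univ _)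
      have h2 : ∑ l : Fin 3, σ l < 3 * N := by
        have := hno 0; have := hno 1; have := hno 2
        rw [Fin.sum_univ_three]; omega
      omega
    obtain ⟨i₀, hi₀⟩ := hex
    have hmem : (monomial σ (1 : k)) ∈ Ideal.span ({f, g} : Set (MvPolynomial (Fin 3) k)) := by
      have hsub : Finsupp.single i₀ N ≤ σ := by
        rw [Finsupp.single_le_iff]; exact hi₀
      have hrw : (monomial σ (1 : k))
          = (X i₀ : MvPolynomial (Fin 3) k) ^ N * monomial (σ - Finsupp.single i₀ N) 1 := by
        rw [X_pow_eq_monomial, monomial_mul, one_mul, add_tsub_cancel_of_le hsub]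
      rw [hrw]
      exact Ideal.mul_mem_right _ _ (hX i₀)
    obtain ⟨a, b, hab⟩ := Ideal.mem_span_pair.mp hmem
    have hσh : (monomial σ (1 : k)).IsHomogeneous q := isHomogeneous_monomial 1 hσ
    have heq : (monomial σ (1 : k))
        = homogeneousComponent q (a * f) + homogeneousComponent q (b * g) := by
      have h' := congrArg (homogeneousComponent q) hab
      rw [map_add, homogeneousComponent_of_mem hσh, if_pos rfl] at h'
      exact h'.symm
    rw [heq]
    have hqpos : 0 < q := by omega
    apply Submodule.add_mem
    · by_cases hdq : d ≤ q
      · obtain ⟨q', rfl⟩ : ∃ q', q = q' + d := ⟨q - d, by omega⟩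
        rw [hc_mul_homog a f hf q']
        have ha' : homogeneousComponent q' a ∈ Submodule.span k (Bset f g d e N q') :=
          homog_mem_span (homogeneousComponent_isHomogeneous q' a)
            (fun τ hτ => IH q' (by omega) τ hτ)
        have hmap := Submodule.mem_map_of_mem (f := LinearMap.mulRight k f) ha'
        rw [Submodule.map_span] at hmap
        refine Submodule.span_le.mpr ?_ hmap
        rintro x ⟨y, ⟨i, j, τ, hτ, hdeg, rfl⟩, rfl⟩
        refine Submodule.subset_span ⟨i + 1, j, τ, hτ, by ring_nf; omega, ?_⟩
        simp only [LinearMap.mulRight_apply]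
        ring
      · rw [hc_mul_homog_zero a f hf (by omega)]
        exact Submodule.zero_mem _
    · by_cases heq' : e ≤ q
      · obtain ⟨q', rfl⟩ : ∃ q', q = q' + e := ⟨q - e, by omega⟩
        rw [hc_mul_homog b g hg q']
        have hb' : homogeneousComponent q' b ∈ Submodule.span k (Bset f g d e N q') :=
          homog_mem_span (homogeneousComponent_isHomogeneous q' b)
            (fun τ hτ => IH q' (by omega) τ hτ)
        have hmap := Submodule.mem_map_of_mem (f := LinearMap.mulRight k g) hb'
        rw [Submodule.map_span] at hmap
        refine Submodule.span_le.mpr ?_ hmap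
        rintro x ⟨y, ⟨i, j, τ, hτ, hdeg, rfl⟩, rfl⟩
        refine Submodule.subset_span ⟨i, j + 1, τ, hτ, by ring_nf; omega, ?_⟩
        simp only [LinearMap.mulRight_apply]
        ring
      · rw [hc_mul_homog_zero b g hg (by omega)]
        exact Submodule.zero_mem _

lemma counting_contradiction (f g : MvPolynomial (Fin 3) k) (d e N : ℕ) (hd : 0 < d)
    (he : 0 < e) (hf : f.IsHomogeneous d) (hg : g.IsHomogeneous e) (hN : 0 < N)
    (hX : ∀ i : Fin 3, (X i : MvPolynomial (Fin 3) k) ^ N ∈ Ideal.span {f, g}) : False := by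
  classical
  set K : ℕ := (3 * N) ^ 3 with hKdef
  set m : ℕ := 9 * K with hmdef
  set n : ℕ := 3 * m with hndef
  set G : Finset (MvPolynomial (Fin 3) k) :=
    ((Finset.range (n+1) ×ˢ Finset.range (n+1)) ×ˢ
      (Finset.univ : Finset (Fin 3 → Fin (3*N)))).image
      (fun p => f ^ p.1.1 * g ^ p.1.2 *
        monomial (Finsupp.equivFunOnFinite.symm (fun l => ((p.2 l : ℕ)))) 1) with hGdef
  have hBG : ∀ q ≤ n, Bset f g d e N q ⊆ ↑G := by
    rintro q hqn x ⟨i, j, τ, hτ, hdeg, rfl⟩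
    refine Finset.mem_coe.mpr (Finset.mem_image.mpr ⟨((i, j), fun l => ⟨τ l, hτ l⟩), ?_, ?_⟩)
    · refine Finset.mem_product.mpr ⟨Finset.mem_product.mpr ⟨?_, ?_⟩, Finset.mem_univ _⟩
      · refine Finset.mem_range.mpr ?_
        show i < n + 1
        have : i ≤ i * d := Nat.le_mul_of_pos_right i hd
        omega
      · refine Finset.mem_range.mpr ?_
        show j < n + 1
        have : j ≤ j * e := Nat.le_mul_of_pos_right j he
        omega
    · have hτ' : (Finsupp.equivFunOnFinite.symm
          fun l => (((fun l => (⟨τ l, hτ l⟩ : Fin (3*N))) l : ℕ))) = τ := by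
        have h1 : (fun l => (((fun l => (⟨τ l, hτ l⟩ : Fin (3*N))) l : ℕ))) = ⇑τ := rfl
        rw [h1, Finsupp.equivFunOnFinite_symm_coe]
      simp only [hτ']
  have hspan : ∀ q ≤ n, Submodule.span k (Bset f g d e N q)
      ≤ Submodule.span k (G : Set (MvPolynomial (Fin 3) k)) :=
    fun q hq => Submodule.span_mono (hBG q hq)
  set emb : (Fin 3 → Fin (m+1)) → (Fin 3 →₀ ℕ) :=
    fun t => Finsupp.equivFunOnFinite.symm (fun l => (t l : ℕ)) with hembdef
  have hembinj : Function.Injective emb := by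
    intro t t' h
    have h2 : (fun l => (t l : ℕ)) = (fun l => (t' l : ℕ)) :=
      Finsupp.equivFunOnFinite.symm.injective h
    funext l
    exact Fin.val_injective (congrFun h2 l)
  have hw : LinearIndependent k
      (fun t : Fin 3 → Fin (m+1) => (monomial (emb t) (1:k) : MvPolynomial (Fin 3) k)) := by
    have := (basisMonomials (Fin 3) k).linearIndependent.comp emb hembinj
    rwa [coe_basisMonomials] at this
  set W := Submodule.span k (G : Set (MvPolynomial (Fin 3) k)) with hWdef
  have hmemW : ∀ t : Fin 3 → Fin (m+1), (monomial (emb t) (1:k)) ∈ W := by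
    intro t
    have h2 : ∀ l, emb t l ≤ m := fun l => Fin.is_le (t l)
    have hdeg : (emb t).degree ≤ n := by
      have h1 : (emb t).degree ≤ ∑ l : Fin 3, emb t l :=
        Finset.sum_le_sum_of_subset (Finset.subset_univ _)
      have h3 : ∑ l : Fin 3, emb t l ≤ 3 * m := by
        rw [Fin.sum_univ_three]
        have := h2 0; have := h2 1; have := h2 2; omega
      omega
    exact hspan _ hdeg (monomial_mem_span f g d e N hd he hf hg hN hX _ (emb t) rfl)
  have hw' : LinearIndependent k
      (fun t : Fin 3 → Fin (m+1) => (⟨monomial (emb t) 1, hmemW t⟩ : W)) := by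
    apply LinearIndependent.of_comp W.subtype
    exact hw
  have hcard : (m+1)^3 ≤ Module.finrank k W := by
    have := hw'.fintype_card_le_finrank
    simpa [Fintype.card_fun] using this
  have hrank : Module.finrank k W ≤ G.card := finrank_span_finset_le_card G
  have hGcard : G.card ≤ (n+1) * ((n+1) * K) := by
    refine le_trans Finset.card_image_le ?_
    rw [Finset.card_product, Finset.card_product, Finset.card_range, Finset.card_univ,
      Fintype.card_fun]
    simp [hKdef, mul_assoc]
  have hK1 : 27 ≤ K := by
    have : 3 ≤ 3 * N := by omega
    calc (27:ℕ) = 3^3 := by norm_num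
    _ ≤ (3*N)^3 := Nat.pow_le_pow_left this 3
  have hfinal : (m+1)^3 ≤ (n+1) * ((n+1) * K) := le_trans hcard (le_trans hrank hGcard)
  rw [hndef, hmdef] at hfinal
  nlinarith [hfinal, hK1]

end PlaneCurvesAux

/-- Over an algebraically closed field `k`, any two plane projective curves meet: if `f` and
`g` are homogeneous polynomials of positive degree in three variables over `k`, then they
have a common nonzero zero in `k³`. -/
theorem plane_curves_intersect
    (k : Type*) [Field k] [IsAlgClosed k]
    (f g : MvPolynomial (Fin 3) k) (d e : ℕ) (hd : 0 < d) (he : 0 < e)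
    (hf : f.IsHomogeneous d) (hg : g.IsHomogeneous e) :
    ∃ a : Fin 3 → k, a ≠ 0 ∧ MvPolynomial.eval a f = 0 ∧ MvPolynomial.eval a g = 0 := by
  classical
  by_contra hcon
  push_neg at hcon
  have hzero : MvPolynomial.zeroLocus k (Ideal.span {f, g}) ⊆ {(0 : Fin 3 → k)} := by
    intro a ha
    simp only [Set.mem_singleton_iff]
    by_contra ha0
    have haf : MvPolynomial.eval a f = 0 := ha f (Ideal.subset_span (by simp))
    have hag : MvPolynomial.eval a g = 0 := ha g (Ideal.subset_span (by simp))
    exact hcon a ha0 haf hag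
  have hrad : ∀ i : Fin 3,
      (MvPolynomial.X i : MvPolynomial (Fin 3) k) ∈ (Ideal.span {f, g}).radical := by
    intro i
    rw [← MvPolynomial.vanishingIdeal_zeroLocus_eq_radical (K := k)]
    refine MvPolynomial.mem_vanishingIdeal_iff.mpr fun x hx => ?_
    have hx0 : x = 0 := hzero hx
    subst hx0
    simp
  choose n hn using fun i => (Ideal.mem_radical_iff.mp (hrad i))
  refine PlaneCurvesAux.counting_contradiction f g d e ((∑ j : Fin 3, n j) + 1) hd he hf hg
    (by omega) fun i => ?_
  have hle : n i ≤ (∑ j : Fin 3, n j) + 1 :=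
    le_trans (Finset.single_le_sum (fun _ _ => Nat.zero_le _) (Finset.mem_univ i)) (by omega)
  have hpow : (MvPolynomial.X i : MvPolynomial (Fin 3) k) ^ ((∑ j : Fin 3, n j) + 1)
      = MvPolynomial.X i ^ ((∑ j : Fin 3, n j) + 1 - n i) * MvPolynomial.X i ^ (n i) := by
    rw [← pow_add]
    congr 1
    omega
  rw [hpow]
  exact Ideal.mul_mem_left _ _ (hn i)
end
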